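/- arXiv:2010.14663 — 4 statements merged into one kernel-verified Lean document; each statement's English description precedes it below -/
import Mathlib

section
/- Let k ≥ 1 and n ≥ 1, and let u and v be words of length n over Σ_k. Let i = lso(u,v) (the length of the shortest right-border of (u,v), or 0 if none) and j = lso(v,u) (the length of the shortest left-border of (u,v), or 0 if none). Then i + j ≤ n if and only if there exist words s, t over Σ_k, an unbordered word x of length j, and an unbordered word y of length i such that u = x·s·y and v = y·t·x (where x or y may be empty exactly when j = 0 or i = 0 respectively, an empty word being counted as unbordered). -/
open Classical Finset Filter

/-- A border of `w`: a non-empty word that is both a proper prefix and a suffix of `w`. -/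
def IsBorder {k : ℕ} (w b : List (Fin k)) : Prop :=
  b ≠ [] ∧ b ≠ w ∧ b <+: w ∧ b <:+ w

/-- A word is unbordered if it has no border. -/
def Unbordered {k : ℕ} (w : List (Fin k)) : Prop :=
  ∀ b, ¬ IsBorder w b

/-- A right-border of `(u,v)`: a non-empty proper suffix of `u` that is a proper prefix of `v`. -/
def IsRightBorder {k : ℕ} (u v b : List (Fin k)) : Prop :=
  b ≠ [] ∧ b <:+ u ∧ b ≠ u ∧ b <+: v ∧ b ≠ v

/-- A left-border of `(u,v)`: a non-empty proper prefix of `u` that is a proper suffix of `v`. -/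
def IsLeftBorder {k : ℕ} (u v b : List (Fin k)) : Prop :=
  b ≠ [] ∧ b <+: u ∧ b ≠ u ∧ b <:+ v ∧ b ≠ v

def MutuallyBordered {k : ℕ} (u v : List (Fin k)) : Prop :=
  (∃ b, IsRightBorder u v b) ∧ (∃ b, IsLeftBorder u v b)

def MutuallyUnbordered {k : ℕ} (u v : List (Fin k)) : Prop :=
  (¬ ∃ b, IsRightBorder u v b) ∧ (¬ ∃ b, IsLeftBorder u v b)

def RightBordered {k : ℕ} (u v : List (Fin k)) : Prop :=
  (∃ b, IsRightBorder u v b) ∧ (¬ ∃ b, IsLeftBorder u v b)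

/-- `lso u v`: the length of the shortest right-border of `(u,v)`, or `0` if there is none. -/
noncomputable def lso {k : ℕ} (u v : List (Fin k)) : ℕ :=
  sInf {m | ∃ b : List (Fin k), IsRightBorder u v b ∧ b.length = m}

def IsShortestRightBorder {k : ℕ} (u v b : List (Fin k)) : Prop :=
  IsRightBorder u v b ∧ ∀ b', IsRightBorder u v b' → b.length ≤ b'.length

def IsShortestLeftBorder {k : ℕ} (u v b : List (Fin k)) : Prop :=
  IsLeftBorder u v b ∧ ∀ b', IsLeftBorder u v b' → b.length ≤ b'.length

/-- The finite set of all length-`n` words over `Σ_k`. -/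
def Words (k n : ℕ) : Finset (List (Fin k)) :=
  (Finset.univ : Finset (Fin n → Fin k)).image List.ofFn

/-- `UB k n`: the number of unbordered words of length `n` over `Σ_k`. -/
noncomputable def UB (k n : ℕ) : ℕ :=
  ((Words k n).filter Unbordered).card

/-- `M k n`: the number of mutually bordered pairs of length-`n` words over `Σ_k`. -/
noncomputable def M (k n : ℕ) : ℕ :=
  ((Words k n ×ˢ Words k n).filter (fun p => MutuallyBordered p.1 p.2)).card

/-- `R k n`: the number of right-bordered pairs of length-`n` words over `Σ_k`. -/
noncomputable def R (k n : ℕ) : ℕ :=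
  ((Words k n ×ˢ Words k n).filter (fun p => RightBordered p.1 p.2)).card

/-- `U k n`: the number of mutually unbordered pairs of length-`n` words over `Σ_k`. -/
noncomputable def U (k n : ℕ) : ℕ :=
  ((Words k n ×ˢ Words k n).filter (fun p => MutuallyUnbordered p.1 p.2)).card

/-- `G u v m`: the number of unbordered words of length `m` over `Σ_k` having
`u` as a prefix and `v` as a suffix. -/
noncomputable def G {k : ℕ} (u v : List (Fin k)) (m : ℕ) : ℕ :=
  ((Words k m).filter (fun w => Unbordered w ∧ u <+: w ∧ v <:+ w)).card


lemma decomp_aux {k : ℕ} {w a b : List (Fin k)} (ha : a <+: w) (hb : b <:+ w)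
    (h : a.length + b.length ≤ w.length) : ∃ s, w = a ++ s ++ b := by
  obtain ⟨p, hp⟩ := hb
  have hpw : p <+: w := ⟨b, hp⟩
  have hlen : a.length ≤ p.length := by
    have := congrArg List.length hp
    simp [List.length_append] at this
    omega
  obtain ⟨s, hs⟩ := List.prefix_of_prefix_length_le ha hpw hlen
  exact ⟨s, by rw [← hp, ← hs]⟩

lemma exists_shortest {k : ℕ} (u v : List (Fin k)) :
    ∃ b : List (Fin k), b.length = lso u v ∧ b <:+ u ∧ b <+: v ∧ Unbordered b := by
  by_cases h : {m | ∃ b : List (Fin k), IsRightBorder u v b ∧ b.length = m}.Nonempty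
  · obtain ⟨b, hb, hlen⟩ := Nat.sInf_mem h
    refine ⟨b, hlen, hb.2.1, hb.2.2.2.1, ?_⟩
    rintro c ⟨hc0, hcb, hcp, hcs⟩
    have hclt : c.length < b.length :=
      lt_of_le_of_ne hcp.length_le (fun he => hcb (hcp.eq_of_length he))
    have hbu : b.length ≤ u.length := hb.2.1.length_le
    have hbv : b.length ≤ v.length := hb.2.2.2.1.length_le
    have hrb : IsRightBorder u v c := by
      refine ⟨hc0, hcs.trans hb.2.1, ?_, hcp.trans hb.2.2.2.1, ?_⟩
      · intro he; subst he; omega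
      · intro he; subst he; omega
    have : lso u v ≤ c.length := Nat.sInf_le ⟨c, hrb, rfl⟩
    have hl2 : lso u v = sInf {m | ∃ b : List (Fin k), IsRightBorder u v b ∧ b.length = m} := rfl
    omega
  · rw [Set.not_nonempty_iff_eq_empty] at h
    refine ⟨[], by simp [lso, h], List.nil_suffix, List.nil_prefix, ?_⟩
    rintro c ⟨hc0, _, hcp, _⟩
    exact hc0 (List.prefix_nil.mp hcp)

theorem stmt1 (k n : ℕ) (hk : 1 ≤ k) (hn : 1 ≤ n) (u v : List (Fin k))
    (hu : u.length = n) (hv : v.length = n) :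
    lso u v + lso v u ≤ n ↔
      ∃ s t x y : List (Fin k),
        x.length = lso v u ∧ y.length = lso u v ∧
        Unbordered x ∧ Unbordered y ∧
        u = x ++ s ++ y ∧ v = y ++ t ++ x := by
  constructor
  · intro h
    obtain ⟨y, hy, hysu, hypv, hyub⟩ := exists_shortest u v
    obtain ⟨x, hx, hxsv, hxpu, hxub⟩ := exists_shortest v u
    have h1 : x.length + y.length ≤ u.length := by rw [hx, hy, hu]; omega
    have h2 : y.length + x.length ≤ v.length := by rw [hx, hy, hv]; omega
    obtain ⟨s, hs⟩ := decomp_aux hxpu hysu h1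
    obtain ⟨t, ht⟩ := decomp_aux hypv hxsv h2
    exact ⟨s, t, x, y, hx, hy, hxub, hyub, hs, ht⟩
  · rintro ⟨s, t, x, y, hx, hy, _, _, hus, _⟩
    have := congrArg List.length hus
    simp [List.length_append] at this
    omega
end

section
/- Let k ≥ 1 and n ≥ 1, and let u and v be words of length n over Σ_k. Let i = lso(u,v) and j = lso(v,u). Then i + j > n if and only if both of the following hold: (a) n + 1 ≤ i + j ≤ 4n/3; and (b) there exist distinct words x, y over Σ_k, each of length i + j − n, and words s, t over Σ_k, such that u = x·s·y·t·x and v = y·t·x·s·y, the pair (x,y) is mutually unbordered, both x·s·y and y·t·x are unbordered, and the shortest right-border of (u,v) is y·t·x (of length i) while the shortest left-border of (u,v) is x·s·y (of length j). -/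
open Classical Finset Filter

/-!
Let `p` and `q` be the shortest right- and left-borders of `(u,v)`, of lengths `i` and `j`.
If `i + j > n`, the prefix `q` and the suffix `p` of `u` overlap in a word `y` of length
`d = i + j - n`, and likewise in `v` in a word `x`, so `y` is a prefix and `x` a suffix of `p`,
while `x` is a prefix and `y` a suffix of `q`. Inside `p` the words `y` and `x` cannot overlap:
their overlap would be a left-border of `(u,v)` shorter than `q`; symmetrically inside `q`.
Hence `u = x s y t x` and `v = y t x s y`, so `3d ≤ n`, i.e. `3(i + j) ≤ 4n`. Every remaining
property holds because its failure would produce a right- or left-border shorter than `p` or `q`.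
-/

theorem List.exists_eq_append_of_append_eq_append {α : Type*} {ws xs ys zs : List α}
    (h : ws ++ xs = ys ++ zs) (hl : ys.length ≤ ws.length) :
    ∃ as, ws = ys ++ as ∧ zs = as ++ xs := by
  rcases List.append_eq_append_iff.mp h with ⟨as, rfl, rfl⟩ | h'
  · obtain rfl : as = [] := by simpa using hl
    exact ⟨[], by simp, by simp⟩
  · exact h'

section Borders

variable {k : ℕ} {u v b p q x y : List (Fin k)}

theorem isLeftBorder_iff_isRightBorder : IsLeftBorder u v b ↔ IsRightBorder v u b := by
  constructor <;> rintro ⟨h1, h2, h3, h4, h5⟩ <;> exact ⟨h1, h4, h5, h2, h3⟩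

theorem isShortestLeftBorder_iff_isShortestRightBorder :
    IsShortestLeftBorder u v b ↔ IsShortestRightBorder v u b := by
  simp only [IsShortestLeftBorder, IsShortestRightBorder, isLeftBorder_iff_isRightBorder]

theorem IsRightBorder.length_lt_left (h : IsRightBorder u v b) : b.length < u.length :=
  h.2.1.length_le.lt_of_ne fun he => h.2.2.1 (h.2.1.eq_of_length he)

theorem IsRightBorder.length_lt_right (h : IsRightBorder u v b) : b.length < v.length :=
  h.2.2.2.1.length_le.lt_of_ne fun he => h.2.2.2.2 (h.2.2.2.1.eq_of_length he)

theorem lso_le (h : IsRightBorder u v b) : lso u v ≤ b.length :=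
  Nat.sInf_le ⟨b, h, rfl⟩

theorem exists_isRightBorder_length_eq_lso (h : lso u v ≠ 0) :
    ∃ b, IsRightBorder u v b ∧ b.length = lso u v :=
  Nat.sInf_mem (Nat.nonempty_of_pos_sInf (Nat.pos_of_ne_zero h))

theorem lso_le_length (u v : List (Fin k)) : lso u v ≤ u.length := by
  by_cases h : lso u v = 0
  · omega
  · obtain ⟨b, hb, hbl⟩ := exists_isRightBorder_length_eq_lso h
    exact hbl ▸ hb.length_lt_left.le

theorem isShortestRightBorder_of_length_eq_lso (h : IsRightBorder u v b)
    (hl : b.length = lso u v) : IsShortestRightBorder u v b :=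
  ⟨h, fun _ hb' => hl ▸ lso_le hb'⟩

namespace IsShortestRightBorder

theorem length_le_of_suffix_of_prefix (hp : IsShortestRightBorder u v p) (hb : b ≠ [])
    (hbu : b <:+ u) (hbv : b <+: v) : p.length ≤ b.length := by
  by_contra hlt
  have hu := hp.1.length_lt_left
  have hv := hp.1.length_lt_right
  exact hlt (hp.2 b ⟨hb, hbu, fun he => by subst he; omega, hbv, fun he => by subst he; omega⟩)

theorem not_exists_isRightBorder (hp : IsShortestRightBorder u v p) (hx : x <:+ u)
    (hy : y <+: v) (hl : x.length ≤ p.length) : ¬ ∃ b, IsRightBorder x y b := by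
  rintro ⟨b, hb⟩
  have := hp.length_le_of_suffix_of_prefix hb.1 (hb.2.1.trans hx) (hb.2.2.2.1.trans hy)
  have := hb.length_lt_left
  omega

theorem unbordered (hp : IsShortestRightBorder u v p) : Unbordered p :=
  fun b ⟨hb, hbp, hpre, hsuf⟩ =>
    hp.not_exists_isRightBorder hp.1.2.1 hp.1.2.2.2.1 le_rfl ⟨b, hb, hsuf, hbp, hpre, hbp⟩

/-- An overlap of `x` and `y` in `x ++ a = e ++ y` would be a right-border of `(u,v)` shorter
than `p`. -/
theorem exists_eq_append_of_append_eq_append {a e : List (Fin k)}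
    (hp : IsShortestRightBorder u v p) (hx : x <:+ u) (hy : y <+: v)
    (hyl : y.length < p.length) (h : x ++ a = e ++ y) : ∃ t, e = x ++ t ∧ a = t ++ y := by
  refine List.exists_eq_append_of_append_eq_append h.symm (not_lt.mp fun hlt => ?_)
  obtain ⟨z, rfl, rfl⟩ := List.exists_eq_append_of_append_eq_append h hlt.le
  have hz : z ≠ [] := by
    rintro rfl
    simp at hlt
  have := hp.length_le_of_suffix_of_prefix hz ((List.suffix_append e z).trans hx)
    ((List.prefix_append z a).trans hy)
  simp only [List.length_append] at hyl
  omega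

theorem exists_eq_append (hp : IsShortestRightBorder u v p) (hq : IsShortestRightBorder v u q)
    (huv : u.length = v.length) (hlen : u.length < p.length + q.length) :
    ∃ x y s t : List (Fin k),
      x.length = p.length + q.length - u.length ∧ y.length = p.length + q.length - u.length ∧
      p = y ++ t ++ x ∧ q = x ++ s ++ y ∧
      u = x ++ s ++ y ++ t ++ x ∧ v = y ++ t ++ x ++ s ++ y := by
  obtain ⟨a, hqa⟩ := hq.1.2.2.2.1
  obtain ⟨b, hbp⟩ := hp.1.2.1
  obtain ⟨c, hpc⟩ := hp.1.2.2.2.1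
  obtain ⟨e, heq⟩ := hq.1.2.1
  have hpn := hp.1.length_lt_left
  have hqn := hq.1.length_lt_left
  have lu := congrArg List.length hqa
  have lu' := congrArg List.length hbp
  have lv := congrArg List.length hpc
  have lv' := congrArg List.length heq
  simp only [List.length_append] at lu lu' lv lv'
  obtain ⟨y, hqy, hpy⟩ :=
    List.exists_eq_append_of_append_eq_append (hqa.trans hbp.symm) (by omega)
  obtain ⟨x, hpx, hqx⟩ :=
    List.exists_eq_append_of_append_eq_append (hpc.trans heq.symm) (by omega)
  have ly := congrArg List.length hqy
  have lx := congrArg List.length hpx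
  simp only [List.length_append] at lx ly
  obtain ⟨t, rfl, rfl⟩ := hq.exists_eq_append_of_append_eq_append
    (List.IsSuffix.trans ⟨b, hqy.symm⟩ hq.1.2.1)
    (List.IsPrefix.trans ⟨c, hqx.symm⟩ hq.1.2.2.2.1) (by omega)
    (hpy.symm.trans hpx)
  obtain ⟨s, rfl, rfl⟩ := hp.exists_eq_append_of_append_eq_append
    (List.IsSuffix.trans ⟨y ++ t, hpx.symm⟩ hp.1.2.1)
    (List.IsPrefix.trans ⟨t ++ x, hpy.symm⟩ hp.1.2.2.2.1) (by omega) (hqx.symm.trans hqy)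
  refine ⟨x, y, s, t, by omega, by omega, hpx, hqy, ?_, ?_⟩
  · rw [← hqa, hqy]
    simp
  · rw [← hpc, hpx]
    simp

end IsShortestRightBorder

end Borders

theorem stmt2_general (k n : ℕ) (u v : List (Fin k))
    (hu : u.length = n) (hv : v.length = n) :
    n < lso u v + lso v u ↔
      ((n + 1 ≤ lso u v + lso v u ∧ 3 * (lso u v + lso v u) ≤ 4 * n) ∧
       ∃ x y s t : List (Fin k),
         x ≠ y ∧
         x.length = lso u v + lso v u - n ∧
         y.length = lso u v + lso v u - n ∧
         u = x ++ s ++ y ++ t ++ x ∧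
         v = y ++ t ++ x ++ s ++ y ∧
         MutuallyUnbordered x y ∧
         Unbordered (x ++ s ++ y) ∧ Unbordered (y ++ t ++ x) ∧
         IsShortestRightBorder u v (y ++ t ++ x) ∧
         (y ++ t ++ x).length = lso u v ∧
         IsShortestLeftBorder u v (x ++ s ++ y) ∧
         (x ++ s ++ y).length = lso v u) := by
  refine ⟨fun h => ?_, fun ⟨⟨h, _⟩, _⟩ => h⟩
  obtain ⟨p, hp, hpl⟩ := exists_isRightBorder_length_eq_lso (u := u) (v := v)
    (by have := lso_le_length v u; omega)
  obtain ⟨q, hq, hql⟩ := exists_isRightBorder_length_eq_lso (u := v) (v := u)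
    (by have := lso_le_length u v; omega)
  have hpmin := isShortestRightBorder_of_length_eq_lso hp hpl
  have hqmin := isShortestRightBorder_of_length_eq_lso hq hql
  obtain ⟨x, y, s, t, hx, hy, rfl, rfl, hu', hv'⟩ :=
    hpmin.exists_eq_append hqmin (hu.trans hv.symm) (by omega)
  have hxpre : x <+: u := hu' ▸ by simp
  have hxsuf : x <:+ u := hu' ▸ List.suffix_append _ _
  have hypre : y <+: v := hv' ▸ by simp
  have hysuf : y <:+ v := hv' ▸ List.suffix_append _ _
  have hn : x.length + s.length + y.length + t.length + x.length = n := by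
    simp only [← hu, hu', List.length_append]
  have hi : lso u v = y.length + t.length + x.length := by simp only [← hpl, List.length_append]
  have hj : lso v u = x.length + s.length + y.length := by simp only [← hql, List.length_append]
  simp only [List.length_append, hu] at hx hy
  have hxy : x ≠ y := by
    rintro rfl
    have := hpmin.length_le_of_suffix_of_prefix (List.ne_nil_of_length_pos (by omega)) hxsuf hypre
    simp only [List.length_append] at this
    omega
  have hmu : MutuallyUnbordered x y :=
    ⟨hpmin.not_exists_isRightBorder hxsuf hypre (by rw [hpl]; omega), fun ⟨b, hb⟩ =>
      hqmin.not_exists_isRightBorder hysuf hxpre (by rw [hql]; omega)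
        ⟨b, isLeftBorder_iff_isRightBorder.mp hb⟩⟩
  refine ⟨⟨by omega, by omega⟩, x, y, s, t, hxy, by omega, by omega, hu', hv', hmu,
    hqmin.unbordered, hpmin.unbordered, hpmin, hpl,
    isShortestLeftBorder_iff_isShortestRightBorder.mpr hqmin, hql⟩

theorem stmt2 (k n : ℕ) (hk : 1 ≤ k) (hn : 1 ≤ n) (u v : List (Fin k))
    (hu : u.length = n) (hv : v.length = n) :
    n < lso u v + lso v u ↔
      ((n + 1 ≤ lso u v + lso v u ∧ 3 * (lso u v + lso v u) ≤ 4 * n) ∧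
       ∃ x y s t : List (Fin k),
         x ≠ y ∧
         x.length = lso u v + lso v u - n ∧
         y.length = lso u v + lso v u - n ∧
         u = x ++ s ++ y ++ t ++ x ∧
         v = y ++ t ++ x ++ s ++ y ∧
         MutuallyUnbordered x y ∧
         Unbordered (x ++ s ++ y) ∧ Unbordered (y ++ t ++ x) ∧
         IsShortestRightBorder u v (y ++ t ++ x) ∧
         (y ++ t ++ x).length = lso u v ∧
         IsShortestLeftBorder u v (x ++ s ++ y) ∧
         (x ++ s ++ y).length = lso v u) :=
  stmt2_general k n u v hu hv
end

section
/- For every n ≥ 2 there exist words u and v of length n over the binary alphabet Σ_2 such that lso(u,v) + lso(v,u) = ⌊4n/3⌋. In particular, for n = 3m (m ≥ 1) the pair (u,v) = (0^m 1^m 0^m, 1^m 0^m 1^m) satisfies lso(u,v) + lso(v,u) = 4m; for n = 3m+1 the pair (0^m 1^{m+1} 0^m, 1^{m+1} 0^m 1^m) satisfies lso(u,v) + lso(v,u) = 4m+1; and for n = 3m+2 the pair (0^m 1^{m+2} 0^m, 1^{m+2} 0^m 1^m) satisfies lso(u,v) + lso(v,u) = 4m+2. -/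
open Classical Finset Filter

/-! The shortest right-border of `(x^s y^p x^q, y^p x^q t)` is forced by the runs to be `y^p x^q`.
Hence for `u = 0^a 1^b 0^a` and `v = 1^b 0^a 1^c` with `c ≤ b` the shortest right-border of
`(u, v)` is `1^b 0^a` and that of `(v, u)` is `0^a 1^c`, so `lso u v + lso v u = 2a + b + c`.
For `n = 3a + r` with `r < 3` and `a ≥ 1`, the block lengths `(a, a + r, a)` give `4a + r = ⌊4n/3⌋`;
the remaining case `n = 2` is `u = v = 11`. -/

open List

theorem IsShortestRightBorder.lso_eq {k : ℕ} {u v b : List (Fin k)}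
    (h : IsShortestRightBorder u v b) : lso u v = b.length :=
  le_antisymm (Nat.sInf_le ⟨b, h.1, rfl⟩)
    (le_csInf ⟨_, b, h.1, rfl⟩ fun _ ⟨b', hb', hlen⟩ => hlen ▸ h.2 b' hb')

theorem getElem_replicate_append_replicate_append_replicate {α : Type*} {a b c i : ℕ}
    {x y z : α} (hi : i < (replicate a x ++ replicate b y ++ replicate c z).length) :
    (replicate a x ++ replicate b y ++ replicate c z)[i] =
      if i < a then x else if i < a + b then y else z := by
  simp only [getElem_append, getElem_replicate, length_append, length_replicate]
  split_ifs <;> first | rfl | omega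

/-- A right-border starts with `y`, so it begins inside the block `y^p` of the first word; beginning
after that block's first letter would align the `x` following the block with a `y` of the second
word. -/
theorem isShortestRightBorder_replicate {k : ℕ} {x y : Fin k} (hxy : x ≠ y) {s p q : ℕ}
    (hs : 1 ≤ s) (hp : 1 ≤ p) (hq : 1 ≤ q) {t : List (Fin k)} (ht : t ≠ []) :
    IsShortestRightBorder (replicate s x ++ replicate p y ++ replicate q x)
      (replicate p y ++ replicate q x ++ t) (replicate p y ++ replicate q x) := by
  refine ⟨⟨?_, ?_, ?_, prefix_append _ _, ?_⟩, ?_⟩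
  · simp; omega
  · rw [append_assoc]; exact suffix_append _ _
  · intro h; have := congrArg length h; simp at this; omega
  · intro h; have := congrArg length h; simp at this; exact ht this
  · rintro b ⟨hne, hsuf, -, hpre, -⟩
    set ℓ := b.length with hℓ
    have hℓpos : 0 < ℓ := length_pos_iff.2 hne
    have hℓu : ℓ ≤ s + p + q := by simpa [add_assoc] using hsuf.length_le
    have hb_u : ∀ i (hi : i < ℓ),
        b[i] = if s + p + q - ℓ + i < s then x else if s + p + q - ℓ + i < s + p then y else x := by
      intro i hi
      rw [hsuf.getElem hi, getElem_replicate_append_replicate_append_replicate]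
      simp [hℓ, add_assoc]
    have hb_v : ∀ i (hi : i < ℓ), i < p → b[i] = y := by
      intro i hi hip
      rw [hpre.getElem hi]
      simp [hip]
    have hfirst := (hb_u 0 hℓpos).symm.trans (hb_v 0 hℓpos hp)
    have hℓq : q < ℓ := by
      by_contra!
      rw [if_neg (by omega), if_neg (by omega)] at hfirst
      exact hxy hfirst
    by_contra! hshort
    simp only [length_append, length_replicate] at hshort
    have hlast := (hb_u (ℓ - q) (by omega)).symm.trans (hb_v (ℓ - q) (by omega) (by omega))
    rw [if_neg (by omega), if_neg (by omega)] at hlast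
    exact hxy hlast

theorem lso_replicate_append_replicate {k : ℕ} {x y : Fin k} (hxy : x ≠ y) {s p q : ℕ}
    (hs : 1 ≤ s) (hp : 1 ≤ p) (hq : 1 ≤ q) {t : List (Fin k)} (ht : t ≠ []) :
    lso (replicate s x ++ replicate p y ++ replicate q x) (replicate p y ++ replicate q x ++ t) =
      p + q := by
  rw [(isShortestRightBorder_replicate hxy hs hp hq ht).lso_eq]
  simp

theorem lso_replicate_self {k n : ℕ} (x : Fin k) (hn : 2 ≤ n) :
    lso (replicate n x) (replicate n x) = 1 := by
  have hsplit : replicate n x = replicate (n - 1) x ++ [x] := by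
    rw [← replicate_succ']; congr; omega
  have hsplit' : replicate n x = [x] ++ replicate (n - 1) x := by
    rw [singleton_append, ← replicate_succ]; congr; omega
  have hborder : IsRightBorder (replicate n x) (replicate n x) [x] := by
    refine ⟨cons_ne_nil _ _, hsplit ▸ suffix_append _ _, ?_, hsplit' ▸ prefix_append _ _, ?_⟩ <;>
    · intro h; have := congrArg length h; simp at this; omega
  exact IsShortestRightBorder.lso_eq
    ⟨hborder, fun b hb => length_pos_iff.2 hb.1⟩

theorem lso_add_lso_replicate {k : ℕ} {x y : Fin k} (hxy : x ≠ y) {a b c : ℕ}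
    (ha : 1 ≤ a) (hc : 1 ≤ c) (hcb : c ≤ b) :
    lso (replicate a x ++ replicate b y ++ replicate a x)
        (replicate b y ++ replicate a x ++ replicate c y) +
      lso (replicate b y ++ replicate a x ++ replicate c y)
        (replicate a x ++ replicate b y ++ replicate a x) = 2 * a + b + c := by
  have hv : replicate a x ++ replicate b y ++ replicate a x =
      replicate a x ++ replicate c y ++ (replicate (b - c) y ++ replicate a x) := by
    rw [append_assoc _ (replicate c y), ← append_assoc (replicate c y), ← replicate_add,
      Nat.add_sub_cancel' hcb, append_assoc]
  rw [lso_replicate_append_replicate hxy ha (by omega) ha (by simp; omega), hv,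
    lso_replicate_append_replicate hxy.symm (by omega) ha hc (by simp; omega)]
  omega

theorem stmt4 :
    (∀ n : ℕ, 2 ≤ n → ∃ u v : List (Fin 2), u.length = n ∧ v.length = n ∧
      lso u v + lso v u = 4 * n / 3) ∧
    (∀ m : ℕ, 1 ≤ m →
      lso (List.replicate m (0 : Fin 2) ++ List.replicate m 1 ++ List.replicate m 0)
          (List.replicate m (1 : Fin 2) ++ List.replicate m 0 ++ List.replicate m 1) +
      lso (List.replicate m (1 : Fin 2) ++ List.replicate m 0 ++ List.replicate m 1)
          (List.replicate m (0 : Fin 2) ++ List.replicate m 1 ++ List.replicate m 0)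
        = 4 * m) ∧
    (∀ m : ℕ, 1 ≤ m →
      lso (List.replicate m (0 : Fin 2) ++ List.replicate (m + 1) 1 ++ List.replicate m 0)
          (List.replicate (m + 1) (1 : Fin 2) ++ List.replicate m 0 ++ List.replicate m 1) +
      lso (List.replicate (m + 1) (1 : Fin 2) ++ List.replicate m 0 ++ List.replicate m 1)
          (List.replicate m (0 : Fin 2) ++ List.replicate (m + 1) 1 ++ List.replicate m 0)
        = 4 * m + 1) ∧
    (∀ m : ℕ,
      lso (List.replicate m (0 : Fin 2) ++ List.replicate (m + 2) 1 ++ List.replicate m 0)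
          (List.replicate (m + 2) (1 : Fin 2) ++ List.replicate m 0 ++ List.replicate m 1) +
      lso (List.replicate (m + 2) (1 : Fin 2) ++ List.replicate m 0 ++ List.replicate m 1)
          (List.replicate m (0 : Fin 2) ++ List.replicate (m + 2) 1 ++ List.replicate m 0)
        = 4 * m + 2) := by
  refine ⟨fun n hn => ?_, fun m hm => ?_, fun m hm => ?_, fun m => ?_⟩
  · obtain rfl | hn := hn.eq_or_lt
    · exact ⟨replicate 2 1, replicate 2 1, rfl, rfl, by rw [lso_replicate_self 1 le_rfl]⟩
    refine ⟨replicate (n / 3) 0 ++ replicate (n / 3 + n % 3) 1 ++ replicate (n / 3) 0,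
      replicate (n / 3 + n % 3) 1 ++ replicate (n / 3) 0 ++ replicate (n / 3) 1,
      by simp; omega, by simp; omega, ?_⟩
    rw [lso_add_lso_replicate (by decide) (by omega) (by omega) (by omega)]
    omega
  · rw [lso_add_lso_replicate (by decide) hm hm le_rfl]; ring
  · rw [lso_add_lso_replicate (by decide) hm hm (by omega)]; ring
  · obtain rfl | hm := m.eq_zero_or_pos
    · simp only [replicate_zero, append_nil, nil_append, lso_replicate_self 1 le_rfl]
    · rw [lso_add_lso_replicate (by decide) hm hm (by omega)]; ring
end

section
/- Let k ≥ 1 and n ≥ t ≥ 1. Let u and v be words of length t over Σ_k such that (u,v) is mutually unbordered and u ≠ v. Let G_{u,v}(m) denote the number of unbordered words of length m over Σ_k that have u as a prefix and v as a suffix. Then G_{u,v}(n) = 0 if n < 2t, and G_{u,v}(n) = k^{n−2t} − Σ_{i=2t}^{⌊n/2⌋} G_{u,v}(i)·k^{n−2i} if n ≥ 2t. -/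
open Classical Finset Filter

/-!
Every word `w` of length `n ≥ 2t` with prefix `u` and suffix `v` is either unbordered or has a
unique unbordered border `b`, its shortest one; then `2|b| ≤ n` and `w = b m b`. Since `(u,v)`
is mutually unbordered and `u ≠ v`, the words `u` and `v` cannot overlap inside `w` or inside
`b`, so `|b| ≥ 2t` and `b` itself has prefix `u` and suffix `v`. Sorting the `k^(n-2t)` words
`u m v` by `|b|` gives `k^(n-2t) = G(n) + Σ_{2t ≤ i ≤ n/2} G(i) k^(n-2i)`.
-/


namespace List

variable {α : Type*}

theorem IsPrefix.drop_prefix_of_suffix {u v w : List α} (hu : u <+: w) (hv : v <:+ w) :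
    u.drop (w.length - v.length) <+: v := by
  have hu' := prefix_iff_eq_take.mp hu
  have hv' := suffix_iff_eq_drop.mp hv
  calc u.drop (w.length - v.length)
      = (w.take u.length).drop (w.length - v.length) := by rw [← hu']
    _ = (w.drop (w.length - v.length)).take (u.length - (w.length - v.length)) := drop_take
    _ = v.take (u.length - (w.length - v.length)) := by rw [← hv']
    _ <+: v := take_prefix _ _

theorem exists_eq_append_append_of_prefix_of_suffix {u v w : List α} (hu : u <+: w)
    (hv : v <:+ w) (h : u.length + v.length ≤ w.length) : ∃ m, w = u ++ m ++ v := by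
  obtain ⟨r, rfl⟩ := hu
  obtain ⟨m, rfl⟩ : v <:+ r :=
    suffix_of_suffix_length_le hv (suffix_append u r)
      (by simp only [List.length_append] at h; omega)
  exact ⟨m, by simp⟩

end List

section Borders

variable {k : ℕ} {w b c : List (Fin k)}

theorem isBorder_append_append (hb : b ≠ []) (m : List (Fin k)) : IsBorder (b ++ m ++ b) b := by
  refine ⟨hb, fun h => ?_, by simp [List.append_assoc], List.suffix_append _ _⟩
  have := congrArg List.length h
  simp only [List.length_append] at this
  exact hb (List.length_eq_zero_iff.mp (by omega))

theorem IsBorder.length_lt (hb : IsBorder w b) : b.length < w.length :=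
  lt_of_le_of_ne hb.2.2.1.length_le fun h => hb.2.1 (hb.2.2.1.eq_of_length h)

theorem IsBorder.trans (hb : IsBorder w b) (hc : IsBorder b c) : IsBorder w c :=
  ⟨hc.1, fun h => absurd (h ▸ hc.length_lt) (not_lt.mpr hb.length_lt.le),
    hc.2.2.1.trans hb.2.2.1, hc.2.2.2.trans hb.2.2.2⟩

theorem IsBorder.isBorder_of_length_lt (hb : IsBorder w b) (hc : IsBorder w c)
    (h : c.length < b.length) : IsBorder b c :=
  ⟨hc.1, fun hcb => (hcb ▸ h).false,
    List.prefix_of_prefix_length_le hc.2.2.1 hb.2.2.1 h.le,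
    List.suffix_of_suffix_length_le hc.2.2.2 hb.2.2.2 h.le⟩

theorem Unbordered.eq_of_isBorder (hb : IsBorder w b) (hc : IsBorder w c) (hbu : Unbordered b)
    (hcu : Unbordered c) : b = c := by
  rcases lt_trichotomy c.length b.length with h | h | h
  · exact absurd (hb.isBorder_of_length_lt hc h) (hbu c)
  · exact (List.prefix_of_prefix_length_le hb.2.2.1 hc.2.2.1 h.ge).eq_of_length h.symm
  · exact absurd (hc.isBorder_of_length_lt hb h) (hcu b)

theorem exists_unbordered_isBorder (hb : IsBorder w b) : ∃ c, IsBorder w c ∧ Unbordered c := by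
  induction hl : b.length using Nat.strong_induction_on generalizing b with
  | _ l ih =>
    by_cases hbu : Unbordered b
    · exact ⟨b, hb, hbu⟩
    · obtain ⟨c, hc⟩ : ∃ c, IsBorder b c := by simpa [Unbordered] using hbu
      exact ih c.length (hl ▸ hc.length_lt) (hb.trans hc) rfl

/-- A border longer than half of `w` overlaps itself, and the overlap is a border of the border. -/
theorem Unbordered.two_mul_length_le_of_isBorder (hb : IsBorder w b) (hbu : Unbordered b) :
    2 * b.length ≤ w.length := by
  by_contra h
  have hlt := hb.length_lt
  apply hbu (b.drop (w.length - b.length))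
  refine ⟨fun h' => ?_, fun h' => ?_, hb.2.2.1.drop_prefix_of_suffix hb.2.2.2,
    List.drop_suffix _ _⟩ <;>
  · have := congrArg List.length h'
    simp only [List.length_drop, List.length_nil] at this
    omega

end Borders

section MutuallyUnbordered

variable {k t : ℕ} {u v w : List (Fin k)}

theorem MutuallyUnbordered.two_mul_le_length (hmu : MutuallyUnbordered u v) (hne : u ≠ v)
    (hu : u.length = t) (hv : v.length = t) (huw : u <+: w) (hvw : v <:+ w) :
    2 * t ≤ w.length := by
  by_contra h
  have htw : t ≤ w.length := hu ▸ huw.length_le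
  rcases htw.eq_or_lt with heq | hlt
  · exact hne ((huw.eq_of_length (by omega)).trans (hvw.eq_of_length (by omega)).symm)
  · refine hmu.1 ⟨u.drop (w.length - v.length), ?_, List.drop_suffix _ _, ?_,
      huw.drop_prefix_of_suffix hvw, ?_⟩ <;>
    · intro h'
      have := congrArg List.length h'
      simp only [List.length_drop, List.length_nil] at this
      omega

theorem MutuallyUnbordered.two_mul_le_length_of_isBorder (hmu : MutuallyUnbordered u v)
    (hne : u ≠ v) (hu : u.length = t) (hv : v.length = t) (huw : u <+: w) (hvw : v <:+ w)
    {b : List (Fin k)} (hb : IsBorder w b) : 2 * t ≤ b.length := by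
  rcases lt_or_ge b.length t with h | h
  · exact absurd ⟨b, hb.1, List.prefix_of_prefix_length_le hb.2.2.1 huw (by omega),
      fun hbu => by rw [hbu] at h; omega,
      List.suffix_of_suffix_length_le hb.2.2.2 hvw (by omega),
      fun hbv => by rw [hbv] at h; omega⟩ hmu.2
  · exact hmu.two_mul_le_length hne hu hv
      (List.prefix_of_prefix_length_le huw hb.2.2.1 (by omega))
      (List.suffix_of_suffix_length_le hvw hb.2.2.2 (by omega))

end MutuallyUnbordered

section Counting

variable {k : ℕ}

theorem mem_Words {n : ℕ} {w : List (Fin k)} : w ∈ Words k n ↔ w.length = n := by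
  refine ⟨fun h => ?_, fun h => ?_⟩
  · obtain ⟨f, -, rfl⟩ := Finset.mem_image.mp h
    simp
  · refine Finset.mem_image.mpr ⟨fun i => w.get (Fin.cast h.symm i), Finset.mem_univ _, ?_⟩
    apply List.ext_getElem <;> simp [h]

theorem card_Words (k n : ℕ) : (Words k n).card = k ^ n := by
  rw [Words, Finset.card_image_of_injective _ List.ofFn_injective]
  simp

noncomputable def prefixSuffixWords (u v : List (Fin k)) (n : ℕ) : Finset (List (Fin k)) :=
  (Words k n).filter fun w => u <+: w ∧ v <:+ w

noncomputable def unborderedPrefixSuffixWords (u v : List (Fin k)) (n : ℕ) :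
    Finset (List (Fin k)) :=
  (Words k n).filter fun w => Unbordered w ∧ u <+: w ∧ v <:+ w

theorem card_unborderedPrefixSuffixWords (u v : List (Fin k)) (n : ℕ) :
    (unborderedPrefixSuffixWords u v n).card = G u v n :=
  rfl

theorem card_prefixSuffixWords {u v : List (Fin k)} {n : ℕ} (h : u.length + v.length ≤ n) :
    (prefixSuffixWords u v n).card = k ^ (n - u.length - v.length) := by
  have himage : prefixSuffixWords u v n =
      (Words k (n - u.length - v.length)).image fun m => u ++ m ++ v := by
    ext w
    simp only [prefixSuffixWords, Finset.mem_filter, Finset.mem_image, mem_Words]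
    constructor
    · rintro ⟨hw, huw, hvw⟩
      obtain ⟨m, rfl⟩ := List.exists_eq_append_append_of_prefix_of_suffix huw hvw (by omega)
      exact ⟨m, by simp only [List.length_append] at hw; omega, rfl⟩
    · rintro ⟨m, hm, rfl⟩
      exact ⟨by simp only [List.length_append]; omega, by simp [List.append_assoc],
        List.suffix_append _ _⟩
  rw [himage, Finset.card_image_of_injective _ fun m m' h => by simpa using h, card_Words]

theorem card_image_append_append {S : Finset (List (Fin k))} {i : ℕ}
    (hS : ∀ b ∈ S, b.length = i) (m : ℕ) :
    ((S ×ˢ Words k m).image fun p => p.1 ++ p.2 ++ p.1).card = S.card * k ^ m := by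
  rw [Finset.card_image_of_injOn, Finset.card_product, card_Words]
  rintro ⟨b, x⟩ hbx ⟨b', x'⟩ hbx' h
  simp only [Finset.coe_product, Set.mem_prod, Finset.mem_coe, mem_Words] at hbx hbx' h
  obtain ⟨hbx_eq, -⟩ := List.append_inj h (by simp [hS b hbx.1, hS b' hbx'.1, hbx.2, hbx'.2])
  obtain ⟨rfl, rfl⟩ := List.append_inj hbx_eq (hS b hbx.1 ▸ hS b' hbx'.1 ▸ rfl)
  rfl

noncomputable def borderedPrefixSuffixWords (u v : List (Fin k)) (n i : ℕ) :
    Finset (List (Fin k)) :=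
  (unborderedPrefixSuffixWords u v i ×ˢ Words k (n - 2 * i)).image fun p => p.1 ++ p.2 ++ p.1

theorem card_borderedPrefixSuffixWords (u v : List (Fin k)) (n i : ℕ) :
    (borderedPrefixSuffixWords u v n i).card = G u v i * k ^ (n - 2 * i) :=
  card_image_append_append (fun _ hb => mem_Words.mp (Finset.mem_filter.mp hb).1) _

theorem exists_unbordered_isBorder_of_mem_borderedPrefixSuffixWords {u v w : List (Fin k)}
    {n i : ℕ} (hi : 1 ≤ i) (hw : w ∈ borderedPrefixSuffixWords u v n i) :
    ∃ b, IsBorder w b ∧ Unbordered b ∧ b.length = i := by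
  simp only [borderedPrefixSuffixWords, unborderedPrefixSuffixWords, Finset.mem_image,
    Finset.mem_product, Finset.mem_filter, mem_Words, Prod.exists] at hw
  obtain ⟨b, m, ⟨⟨hb, hbu, -⟩, -⟩, rfl⟩ := hw
  refine ⟨b, isBorder_append_append (fun h => ?_) m, hbu, hb⟩
  simp only [h, List.length_nil] at hb
  omega

/-- The part indexed by `i` collects the words whose unique unbordered border has length `i`. -/
theorem prefixSuffixWords_eq_union {t n : ℕ} {u v : List (Fin k)}
    (hu : u.length = t) (hv : v.length = t) (hmu : MutuallyUnbordered u v) (hne : u ≠ v) :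
    prefixSuffixWords u v n = unborderedPrefixSuffixWords u v n ∪
      (Icc (2 * t) (n / 2)).biUnion (borderedPrefixSuffixWords u v n) := by
  ext w
  simp only [prefixSuffixWords, unborderedPrefixSuffixWords, borderedPrefixSuffixWords,
    Finset.mem_union, Finset.mem_filter, Finset.mem_biUnion, Finset.mem_Icc, Finset.mem_image,
    Finset.mem_product, mem_Words, Prod.exists]
  constructor
  · rintro ⟨hw, huw, hvw⟩
    by_cases hwu : Unbordered w
    · exact Or.inl ⟨hw, hwu, huw, hvw⟩
    obtain ⟨b', hb'⟩ : ∃ b', IsBorder w b' := by simpa [Unbordered] using hwu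
    obtain ⟨b, hb, hbu⟩ := exists_unbordered_isBorder hb'
    have htb := hmu.two_mul_le_length_of_isBorder hne hu hv huw hvw hb
    have hbw := hbu.two_mul_length_le_of_isBorder hb
    obtain ⟨m, rfl⟩ :=
      List.exists_eq_append_append_of_prefix_of_suffix hb.2.2.1 hb.2.2.2 (by omega)
    simp only [List.length_append] at hw
    refine Or.inr ⟨b.length, ⟨htb, by omega⟩, b, m,
      ⟨⟨rfl, hbu, List.prefix_of_prefix_length_le huw hb.2.2.1 (by omega),
        List.suffix_of_suffix_length_le hvw hb.2.2.2 (by omega)⟩, by omega⟩, rfl⟩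
  · rintro (⟨hw, -, huw, hvw⟩ |
      ⟨i, ⟨-, hin⟩, b, m, ⟨⟨hb, -, hub, hvb⟩, hm⟩, rfl⟩)
    · exact ⟨hw, huw, hvw⟩
    · exact ⟨by simp only [List.length_append]; omega, hub.trans (by simp [List.append_assoc]),
        hvb.trans (List.suffix_append _ _)⟩

theorem pow_eq_G_add_sum {t n : ℕ} {u v : List (Fin k)} (ht : 1 ≤ t) (htn : 2 * t ≤ n)
    (hu : u.length = t) (hv : v.length = t) (hmu : MutuallyUnbordered u v) (hne : u ≠ v) :
    k ^ (n - 2 * t) = G u v n + ∑ i ∈ Icc (2 * t) (n / 2), G u v i * k ^ (n - 2 * i) := by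
  have hdisj : Disjoint (unborderedPrefixSuffixWords u v n)
      ((Icc (2 * t) (n / 2)).biUnion (borderedPrefixSuffixWords u v n)) := by
    refine Finset.disjoint_left.mpr fun w hw hw' => ?_
    obtain ⟨i, hi, hwi⟩ := Finset.mem_biUnion.mp hw'
    obtain ⟨b, hb, -⟩ := exists_unbordered_isBorder_of_mem_borderedPrefixSuffixWords
      (by rw [Finset.mem_Icc] at hi; omega) hwi
    exact (Finset.mem_filter.mp hw).2.1 b hb
  have hpair : (Icc (2 * t) (n / 2) : Set ℕ).PairwiseDisjoint
      (borderedPrefixSuffixWords u v n) := by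
    intro i hi j hj hij
    refine Finset.disjoint_left.mpr fun w hwi hwj => hij ?_
    simp only [Finset.coe_Icc, Set.mem_Icc] at hi hj
    obtain ⟨b, hb, hbu, rfl⟩ :=
      exists_unbordered_isBorder_of_mem_borderedPrefixSuffixWords (by omega) hwi
    obtain ⟨c, hc, hcu, rfl⟩ :=
      exists_unbordered_isBorder_of_mem_borderedPrefixSuffixWords (by omega) hwj
    rw [hbu.eq_of_isBorder hb hc hcu]
  calc k ^ (n - 2 * t) = (prefixSuffixWords u v n).card := by
        rw [card_prefixSuffixWords (by omega), hu, hv, Nat.sub_sub, two_mul]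
    _ = _ := by
        rw [prefixSuffixWords_eq_union hu hv hmu hne, Finset.card_union_of_disjoint hdisj,
          Finset.card_biUnion hpair, card_unborderedPrefixSuffixWords]
        simp only [card_borderedPrefixSuffixWords]

end Counting

theorem stmt5_general (k t n : ℕ) (ht : 1 ≤ t)
    (u v : List (Fin k)) (hu : u.length = t) (hv : v.length = t)
    (hmu : MutuallyUnbordered u v) (hne : u ≠ v) :
    (n < 2 * t → G u v n = 0) ∧
    (2 * t ≤ n →
      (G u v n : ℤ) = (k : ℤ) ^ (n - 2 * t) -
        ∑ i ∈ Finset.Icc (2 * t) (n / 2), (G u v i : ℤ) * (k : ℤ) ^ (n - 2 * i)) := by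
  refine ⟨fun hn => ?_, fun hn => ?_⟩
  · refine Finset.card_eq_zero.mpr (Finset.filter_eq_empty_iff.mpr fun w hw hwuv => ?_)
    obtain ⟨-, huw, hvw⟩ := hwuv
    have := hmu.two_mul_le_length hne hu hv huw hvw
    rw [mem_Words.mp hw] at this
    omega
  · have hcount := pow_eq_G_add_sum ht hn hu hv hmu hne
    zify at hcount
    linarith

theorem stmt5 (k t n : ℕ) (hk : 1 ≤ k) (ht : 1 ≤ t) (htn : t ≤ n)
    (u v : List (Fin k)) (hu : u.length = t) (hv : v.length = t)
    (hmu : MutuallyUnbordered u v) (hne : u ≠ v) :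
    (n < 2 * t → G u v n = 0) ∧
    (2 * t ≤ n →
      (G u v n : ℤ) = (k : ℤ) ^ (n - 2 * t) -
        ∑ i ∈ Finset.Icc (2 * t) (n / 2), (G u v i : ℤ) * (k : ℤ) ^ (n - 2 * i)) :=
  stmt5_general k t n ht u v hu hv hmu hne
end
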